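/- If X and Y are independent uniform random variables on {0,1}^n, and an adversary is given x ⊕ r and y ⊕ r for a uniformly random shared string r, together with |x| mod 4 and |y| mod 4, then the adversary can compute x·y exactly; moreover the conditional min-entropy of X given all this stored information is at least n − O(1). -/

import Mathlib

open scoped Kronecker ComplexOrder
open Matrix BigOperators

/-- Schatten-1 norm `‖A‖₁ = Tr √(AᴴA)`. -/
noncomputable def trNorm {n m : Type*} [Fintype n] [Fintype m] [DecidableEq m] (A : Matrix n m ℂ) : ℝ :=
  (((Matrix.posSemidef_conjTranspose_mul_self A).1.eigenvectorUnitary : Matrix m m ℂ) *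
      diagonal ((fun r : ℝ => (r : ℂ)) ∘ (Real.sqrt ·) ∘ (Matrix.posSemidef_conjTranspose_mul_self A).1.eigenvalues) *
      (star (Matrix.posSemidef_conjTranspose_mul_self A).1.eigenvectorUnitary : Matrix m m ℂ)).trace.re

/-- Trace distance `(1/2)‖A − B‖₁`. -/
noncomputable def trDist {n : Type*} [Fintype n] [DecidableEq n] (A B : Matrix n n ℂ) : ℝ :=
  (1/2) * trNorm (A - B)

/-- `ρ` is a density matrix. -/
def IsDensity {n : Type*} [Fintype n] (ρ : Matrix n n ℂ) : Prop :=
  ρ.PosSemidef ∧ ρ.trace = 1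

/-- The stored information `(x ⊕ r, y ⊕ r, |x| mod 4, |y| mod 4)`. -/
def store16 (n : ℕ) (x y r : Fin n → ZMod 2) :
    (Fin n → ZMod 2) × (Fin n → ZMod 2) × ZMod 4 × ZMod 4 :=
  (x + r, y + r, ((∑ j, (x j).val : ℕ) : ZMod 4), ((∑ j, (y j).val : ℕ) : ZMod 4))

/-!
Over ℕ, `|x| + |y| = |x ⊕ y| + 2 (x·y)`, so `x·y` is half of `|x| + |y| - |x ⊕ y|` mod 4,
and `|x ⊕ y| = |(x ⊕ r) ⊕ (y ⊕ r)|` is read off the stored strings.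

For the entropy bound, the stored value `v = (a, b, s, t)` and `x` determine `r = a - x` and
`y = b - r`, so at most one pair `(y, r)` is compatible with `x`. Given such a pair, every `z` with
`|z| ≡ |x|` and `|z ⊕ w| ≡ |x ⊕ w| (mod 4)`, where `w = y - x`, yields the triple
`(z, z + w, a - z)` storing `v`. Splitting the coordinates into the support of `w` and its
complement, these two congruences hold as soon as `z` has the same weights mod 4 as `x` on each
part; and a nonempty weight class mod 4 in `{0,1}^m` has at least `2^m / 8` elements. Hence at
least `2^n / 64` triples store `v`, and `c = 6` works.
-/

open Finset

def weightMod4 {ι : Type*} [Fintype ι] (z : ι → ZMod 2) : ZMod 4 :=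
  ((∑ j, (z j).val : ℕ) : ZMod 4)

def weightClass (ι : Type*) [Fintype ι] [DecidableEq ι] (p : ZMod 4) : Finset (ι → ZMod 2) :=
  {z | weightMod4 z = p}

section

variable {ι : Type*} [Fintype ι]

@[simp]
lemma mem_weightClass [DecidableEq ι] {p : ZMod 4} {z : ι → ZMod 2} :
    z ∈ weightClass ι p ↔ weightMod4 z = p := by
  simp [weightClass]

lemma weightMod4_cons {m : ℕ} (b : ZMod 2) (z : Fin m → ZMod 2) :
    weightMod4 (Fin.cons b z : Fin (m + 1) → ZMod 2) = (b.val : ZMod 4) + weightMod4 z := by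
  simp [weightMod4, Fin.sum_univ_succ]

lemma card_weightClass_succ (m : ℕ) (p : ZMod 4) :
    #(weightClass (Fin (m + 1)) p) = ∑ b : ZMod 2, #(weightClass (Fin m) (p - b.val)) := by
  simp only [weightClass, card_filter]
  rw [Fintype.sum_equiv (Fin.consEquiv fun _ => ZMod 2).symm _
    (fun bz => if weightMod4 (Fin.cons bz.1 bz.2 : Fin (m + 1) → ZMod 2) = p then 1 else 0)
    (fun z => by simp [Fin.consEquiv]), Fintype.sum_prod_type]
  simp only [weightMod4_cons, eq_sub_iff_add_eq']

lemma card_weightClass_fin_three_pos : ∀ p : ZMod 4, 0 < #(weightClass (Fin 3) p) := by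
  decide

lemma two_pow_le_card_weightClass_fin {m : ℕ} (hm : 3 ≤ m) (p : ZMod 4) :
    2 ^ m ≤ 8 * #(weightClass (Fin m) p) := by
  induction m, hm using Nat.le_induction generalizing p with
  | base => have := card_weightClass_fin_three_pos p; omega
  | succ m hm ih =>
    rw [card_weightClass_succ, mul_sum]
    calc 2 ^ (m + 1) = ∑ _b : ZMod 2, 2 ^ m := by simp [pow_succ, mul_comm]
      _ ≤ _ := sum_le_sum fun b _ => ih _

lemma two_pow_le_card_weightClass [DecidableEq ι] (x : ι → ZMod 2) :
    2 ^ Fintype.card ι ≤ 8 * #(weightClass ι (weightMod4 x)) := by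
  have e := Fintype.equivFin ι
  have hw : ∀ z : ι → ZMod 2, weightMod4 (z ∘ e.symm) = weightMod4 z := fun z => by
    simp only [weightMod4, Function.comp_apply]
    rw [Equiv.sum_comp e.symm (fun i => (z i).val)]
  rw [card_equiv (e.arrowCongr (Equiv.refl _)) (t := weightClass _ (weightMod4 x))
    (fun z => by simp [Equiv.arrowCongr, hw])]
  rcases lt_or_ge (Fintype.card ι) 3 with hlt | hge
  · have : 0 < #(weightClass (Fin (Fintype.card ι)) (weightMod4 x)) :=
      card_pos.2 ⟨x ∘ e.symm, by simp [hw]⟩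
    have : 2 ^ Fintype.card ι ≤ 2 ^ 2 := Nat.pow_le_pow_right two_pos (by omega)
    omega
  · exact two_pow_le_card_weightClass_fin hge _

lemma weightMod4_eq_add_subtype (P : ι → Prop) [DecidablePred P] (z : ι → ZMod 2) :
    weightMod4 z =
      weightMod4 (fun i : {j // P j} => z i) + weightMod4 (fun i : {j // ¬P j} => z i) := by
  simp only [weightMod4, ← Nat.cast_add,
    Fintype.sum_subtype_add_sum_subtype P (fun j => (z j).val)]

lemma zmod_two_eq_zero_of_ne_one (u : ZMod 2) (h : u ≠ 1) : u = 0 := by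
  revert u; decide

lemma natCast_val_add_one_zmod_two (u : ZMod 2) : (((u + 1).val : ℕ) : ZMod 4) = 1 - u.val := by
  revert u; decide

lemma weightMod4_add [DecidableEq ι] (z w : ι → ZMod 2) :
    weightMod4 (z + w) = Fintype.card {j // w j = 1} - weightMod4 (fun i : {j // w j = 1} => z i)
      + weightMod4 (fun i : {j // w j ≠ 1} => z i) := by
  rw [weightMod4_eq_add_subtype (fun j => w j = 1)]
  simp only [weightMod4, Pi.add_apply, Nat.cast_sum,
    fun i : {j // w j ≠ 1} => zmod_two_eq_zero_of_ne_one _ i.2, add_zero]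
  congr 1
  simp only [fun i : {j // w j = 1} => i.2, natCast_val_add_one_zmod_two, sum_sub_distrib,
    sum_const, card_univ, nsmul_eq_mul, mul_one]

lemma weightMod4_eq_of_subtype [DecidableEq ι] {x z : ι → ZMod 2} (w : ι → ZMod 2)
    (h₁ : weightMod4 (fun i : {j // w j = 1} => z i) =
      weightMod4 (fun i : {j // w j = 1} => x i))
    (h₂ : weightMod4 (fun i : {j // w j ≠ 1} => z i) =
      weightMod4 (fun i : {j // w j ≠ 1} => x i)) :
    weightMod4 z = weightMod4 x ∧ weightMod4 (z + w) = weightMod4 (x + w) := by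
  rw [weightMod4_eq_add_subtype (fun j => w j = 1) z,
    weightMod4_eq_add_subtype (fun j => w j = 1) x, weightMod4_add z, weightMod4_add x, h₁,
    h₂]
  exact ⟨rfl, rfl⟩

lemma two_pow_le_card_weightMod4_add [DecidableEq ι] (x w : ι → ZMod 2) :
    2 ^ Fintype.card ι ≤
      64 * #{z | weightMod4 z = weightMod4 x ∧ weightMod4 (z + w) = weightMod4 (x + w)} := by
  let φ := Equiv.piEquivPiSubtypeProd (fun j => w j = 1) (fun _ => ZMod 2)
  let F := weightClass {j // w j = 1} (weightMod4 (φ x).1)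
  let G := weightClass {j // w j ≠ 1} (weightMod4 (φ x).2)
  have hcard : #{z | (φ z).1 ∈ F ∧ (φ z).2 ∈ G} = #F * #G := by
    rw [← card_product]
    exact card_equiv φ (by simp)
  calc 2 ^ Fintype.card ι
        = 2 ^ Fintype.card {j // w j = 1} * 2 ^ Fintype.card {j // w j ≠ 1} := by
        rw [← pow_add, Fintype.card_subtype_compl,
          Nat.add_sub_cancel' (Fintype.card_subtype_le _)]
    _ ≤ 8 * #F * (8 * #G) :=
        Nat.mul_le_mul (two_pow_le_card_weightClass _) (two_pow_le_card_weightClass _)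
    _ = 64 * #{z | (φ z).1 ∈ F ∧ (φ z).2 ∈ G} := by
        rw [hcard]; ring
    _ ≤ _ := Nat.mul_le_mul_left _ <| card_le_card <| monotone_filter_right _ fun z _ h =>
        weightMod4_eq_of_subtype w (mem_weightClass.1 h.1) (mem_weightClass.1 h.2)

end

def halfMod4 (k : ZMod 4) : ZMod 2 := ((k.val / 2 : ℕ) : ZMod 2)

lemma val_add_val_zmod_two (u v : ZMod 2) : u.val + v.val = (u + v).val + 2 * (u * v).val := by
  revert u v; decide

lemma dotProduct_eq_halfMod4 {ι : Type*} [Fintype ι] (x y : ι → ZMod 2) :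
    x ⬝ᵥ y = halfMod4 (weightMod4 x + weightMod4 y - weightMod4 (x + y)) := by
  set N := ∑ j, (x j * y j).val
  have hsum : ∑ j, (x j).val + ∑ j, (y j).val = ∑ j, (x j + y j).val + 2 * N := by
    rw [← sum_add_distrib, mul_sum, ← sum_add_distrib]
    exact sum_congr rfl fun j _ => val_add_val_zmod_two (x j) (y j)
  have h4 : weightMod4 x + weightMod4 y - weightMod4 (x + y) = ((2 * N : ℕ) : ZMod 4) := by
    simp only [weightMod4, Pi.add_apply, ← Nat.cast_add, hsum]
    push_cast; ring
  rw [h4, halfMod4, ZMod.val_natCast, show 2 * N % 4 / 2 = N % 2 by omega, ZMod.natCast_mod]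
  simp [N, dotProduct]

lemma store16_eq (n : ℕ) (x y r : Fin n → ZMod 2) :
    store16 n x y r = (x + r, y + r, weightMod4 x, weightMod4 y) := rfl

lemma exists_decoder_store16 (n : ℕ) :
    ∃ g : (Fin n → ZMod 2) × (Fin n → ZMod 2) × ZMod 4 × ZMod 4 → ZMod 2,
      ∀ x y r : Fin n → ZMod 2, g (store16 n x y r) = x ⬝ᵥ y :=
  ⟨fun v => halfMod4 (v.2.2.1 + v.2.2.2 - weightMod4 (v.1 + v.2.1)), fun x y r => by
    rw [store16_eq]
    dsimp only
    rw [dotProduct_eq_halfMod4, add_add_add_comm, ZModModule.add_self, add_zero]⟩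

lemma card_store16_fiber_le_one (n : ℕ) (x : Fin n → ZMod 2)
    (v : (Fin n → ZMod 2) × (Fin n → ZMod 2) × ZMod 4 × ZMod 4) :
    #{yr : (Fin n → ZMod 2) × (Fin n → ZMod 2) | store16 n x yr.1 yr.2 = v} ≤ 1 := by
  rw [card_le_one]
  rintro ⟨y, r⟩ h ⟨y', r'⟩ h'
  simp only [mem_filter, mem_univ, true_and] at h h'
  obtain rfl : r = r' := add_left_cancel (congrArg Prod.fst (h.trans h'.symm))
  obtain rfl : y = y' := add_right_cancel (congrArg (·.2.1) (h.trans h'.symm))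
  rfl

lemma two_pow_le_card_store16_fiber (n : ℕ) (x y r : Fin n → ZMod 2) :
    2 ^ n ≤ 64 * #{t : (Fin n → ZMod 2) × (Fin n → ZMod 2) × (Fin n → ZMod 2) |
      store16 n t.1 t.2.1 t.2.2 = store16 n x y r} := by
  have hT := two_pow_le_card_weightMod4_add x (y - x)
  rw [Fintype.card_fin, add_sub_cancel] at hT
  refine hT.trans <| Nat.mul_le_mul_left _ <|
    card_le_card_of_injOn (fun z => (z, z + (y - x), x + r - z)) (fun z hz => ?_)
      (fun z _ z' _ h => congrArg Prod.fst h)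
  simp only [coe_filter, mem_univ, true_and, Set.mem_ofPred_eq] at hz ⊢
  rw [store16_eq, store16_eq, hz.1, hz.2]
  refine Prod.ext ?_ (Prod.ext ?_ rfl) <;> dsimp only <;> abel

/-- given `(x⊕r, y⊕r, |x| mod 4, |y| mod 4)` the adversary can compute `x·y`
exactly, while for uniform independent `X, Y, R` the conditional min-entropy of `X` given
the stored information is at least `n − O(1)`: `Pr[X = x ∧ store = v] ≤ 2^{-(n-c)}·Pr[store = v]`. -/
theorem stmt16 :
    ∃ c : ℝ, ∀ n : ℕ,
      (∃ g : (Fin n → ZMod 2) × (Fin n → ZMod 2) × ZMod 4 × ZMod 4 → ZMod 2,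
        ∀ x y r : Fin n → ZMod 2, g (store16 n x y r) = x ⬝ᵥ y) ∧
      (∀ (x : Fin n → ZMod 2) (v : (Fin n → ZMod 2) × (Fin n → ZMod 2) × ZMod 4 × ZMod 4),
        ((Finset.univ.filter (fun yr : (Fin n → ZMod 2) × (Fin n → ZMod 2) =>
            store16 n x yr.1 yr.2 = v)).card : ℝ)
          ≤ (2:ℝ)^(-((n:ℝ) - c)) *
            ((Finset.univ.filter
              (fun t : (Fin n → ZMod 2) × (Fin n → ZMod 2) × (Fin n → ZMod 2) =>
                store16 n t.1 t.2.1 t.2.2 = v)).card : ℝ)) := by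
  refine ⟨6, fun n => ⟨exists_decoder_store16 n, fun x v => ?_⟩⟩
  obtain hempty | ⟨⟨y, r⟩, hyr⟩ :=
    (univ.filter fun yr : (Fin n → ZMod 2) × (Fin n → ZMod 2) =>
      store16 n x yr.1 yr.2 = v).eq_empty_or_nonempty
  · rw [hempty, card_empty, Nat.cast_zero]
    positivity
  obtain rfl : store16 n x y r = v := (mem_filter.1 hyr).2
  have hscale : (2 : ℝ) ^ (-((n : ℝ) - 6)) = 64 / 2 ^ n := by
    rw [neg_sub, Real.rpow_sub two_pos, Real.rpow_natCast]
    norm_num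
  rw [hscale, div_mul_eq_mul_div, le_div_iff₀ (by positivity)]
  calc _ ≤ (1 : ℝ) * 2 ^ n := by
        gcongr
        exact_mod_cast card_store16_fiber_le_one n x _
    _ ≤ _ := by
        rw [one_mul]
        exact_mod_cast two_pow_le_card_store16_fiber n x y r
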